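/- For all integers i, j ≥ 1, the triple x = -(4j+8), y = -(2j+4), z = 2j+i+8 satisfies x³ + y³ + 2z³ = m(j,i) - n(j,i), where m(j,i) = 508 + 891(j+1) + 690·p(j) + (507 + 306j + 72·p(j-1))(i+1) + (144+36j)·p(i) + 18·ρ(i-1) + 198·ρ(j-1), and n(j,i) = 4068 + 4193(j-1) + 1167(j-2)(j-1) + 89(j-3)(j-2)(j-1) + (397 + 150(j-1) + 12(j-2)(j-1))(i-1) + 6(5+j)(i-2)(i-1) + (i-3)(i-2)(i-1). -/
import Mathlib


/-- The k-th triangular number, with p(k)=0 for k ≤ 0. -/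
def triZ (k : ℤ) : ℤ := if k ≤ 0 then 0 else k * (k + 1) / 2

/-- The k-th tetrahedral number, with ρ(k)=0 for k ≤ 0. -/
def tetZ (k : ℤ) : ℤ := if k ≤ 0 then 0 else k * (k + 1) * (k + 2) / 6

/-- m(j,i) from the paper. -/
def mJI (j i : ℤ) : ℤ :=
  508 + 891 * (j + 1) + 690 * triZ j + (507 + 306 * j + 72 * triZ (j - 1)) * (i + 1)
    + (144 + 36 * j) * triZ i + 18 * tetZ (i - 1) + 198 * tetZ (j - 1)

/-- n(j,i) from the paper. -/
def nJI (j i : ℤ) : ℤ :=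
  4068 + 4193 * (j - 1) + 1167 * (j - 2) * (j - 1) + 89 * (j - 3) * (j - 2) * (j - 1)
    + (397 + 150 * (j - 1) + 12 * (j - 2) * (j - 1)) * (i - 1)
    + 6 * (5 + j) * (i - 2) * (i - 1) + (i - 3) * (i - 2) * (i - 1)

lemma triZ_eq (k : ℤ) (hk : 0 ≤ k) : 2 * triZ k = k * (k + 1) := by
  unfold triZ
  split
  · have : k = 0 := le_antisymm ‹_› hk
    simp [this]
  · have h2 : (2:ℤ) ∣ k * (k + 1) := (Int.even_mul_succ_self k).two_dvd
    exact Int.mul_ediv_cancel' h2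

lemma tetZ_eq (k : ℤ) (hk : 0 ≤ k) : 6 * tetZ k = k * (k + 1) * (k + 2) := by
  unfold tetZ
  split
  · have : k = 0 := le_antisymm ‹_› hk
    simp [this]
  · have h2 : (2:ℤ) ∣ k * (k + 1) * (k + 2) :=
      ((Int.even_mul_succ_self k).two_dvd).mul_right _
    have h3 : (3:ℤ) ∣ k * (k + 1) * (k + 2) := by
      obtain h | h | h : k % 3 = 0 ∨ k % 3 = 1 ∨ k % 3 = 2 := by omega
      · exact ((Int.dvd_of_emod_eq_zero h).mul_right _).mul_right _
      · have h' : (3:ℤ) ∣ k + 2 := by omega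
        exact h'.mul_left _
      · have h' : (3:ℤ) ∣ k + 1 := by omega
        exact (h'.mul_left k).mul_right _
    have h6 : (6:ℤ) ∣ k * (k + 1) * (k + 2) := by
      obtain ⟨a, ha⟩ := h2; obtain ⟨b, hb⟩ := h3; omega
    exact Int.mul_ediv_cancel' h6

theorem stmt7 (i j : ℤ) (hi : 1 ≤ i) (hj : 1 ≤ j) :
    (-(4 * j + 8)) ^ 3 + (-(2 * j + 4)) ^ 3 + 2 * (2 * j + i + 8) ^ 3 =
      mJI j i - nJI j i := by
  have h1 := triZ_eq j (by omega)
  have h2 := triZ_eq (j - 1) (by omega)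
  have h3 := triZ_eq i (by omega)
  have h4 := tetZ_eq (i - 1) (by omega)
  have h5 := tetZ_eq (j - 1) (by omega)
  unfold mJI nJI
  linear_combination (-345) * h1 - 36 * (i + 1) * h2 - (72 + 18 * j) * h3 - 3 * h4 - 33 * h5
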